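/- arXiv:2305.17602 — 4 statements merged into one kernel-verified Lean document; each statement's English description precedes it below -/
import Mathlib

section
/- Let S and I be countable sets. Let h : ℕ → S → ℝ be nonnegative. For each of two parameter values ε ∈ {λ, 0} suppose given: nonnegative weights W_ε : S → ℝ; nonnegative probability weights Q_ε : ℕ → S → ℝ with Σ_{x∈S} Q_ε(L,x) = 1 for every L; and functions D_ε : I → S → ℝ. For each L, ε, and σ ∈ I assume the family x ↦ h(L,x)·D_ε^σ(x)·W_ε(x) is absolutely summable and set a_ε^σ(L) := Σ_{x∈S} h(L,x)·D_ε^σ(x)·W_ε(x); assume the expansion h(L,x) = Σ_{σ∈I} a_ε^σ(L)·D_ε^σ(x) holds with absolute convergence for every x, and assume every double family over (σ,x) appearing below is absolutely summable. Suppose there are constants C₁, C₂ ≥ 0 and functions M₁, M₃ : ℕ × I → ℝ≥0 such that for all σ and L: (i) Σ_{y∈S} h(L,y)·|D_λ^σ(y)·W_λ(y) − D_0^σ(y)·W_0(y)| ≤ C₁·L²; (ii) Σ_{y∈S} |h(L,y)·D_λ^σ(y)·W_λ(y)| ≤ C₂·L²; (iii) Σ_{x∈S} |D_0^σ(x)|·Q_0(L,x)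 ≤ M₁(L,σ); (iv) Σ_{x∈S} |D_λ^σ(x)|·|Q_λ(L,x) − Q_0(L,x)| ≤ M₃(L,σ). Assume for j ∈ {1,3}: Σ_{σ∈I} L²·M_j(L,σ) < ∞ for every L, lim_{L→∞} L²·M_j(L,σ) = 0 for every σ, and there is a summable g_j : I → ℝ≥0 with L²·M_j(L,σ) ≤ g_j(σ) for all L, σ. Finally assume lim_{L→∞} Σ_{σ∈I} ( Σ_{x∈S} |D_λ^σ(x) − D_0^σ(x)|·Q_0(L,x) ) · ( Σ_{y∈S} |h(L,y)·D_λ^σ(y)·W_λ(y)| ) = 0. Then lim_{L→∞} Σ_{x∈S} h(L,x)·|Q_λ(L,x) − Q_0(L,x)| = 0. -/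
open Filter Topology

/-- Proposition 4.2 of the paper: a general convergence result via orthogonal duality.
`true` plays the role of the parameter value `λ`, and `false` of the value `0`. -/
theorem general_orthogonality_convergence
    (S I : Type*) [Countable S] [Countable I]
    (h : ℕ → S → ℝ)
    (W : Bool → S → ℝ) (Q : Bool → ℕ → S → ℝ) (D : Bool → I → S → ℝ)
    (hh : ∀ L x, 0 ≤ h L x)
    (hW : ∀ ε x, 0 ≤ W ε x)
    (hQpos : ∀ ε L x, 0 ≤ Q ε L x)
    (hQsum : ∀ ε L, HasSum (fun x => Q ε L x) 1)
    -- the coefficients a_ε^σ(L), with the required absolute summability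
    (hasum : ∀ ε L σ, Summable (fun x => h L x * D ε σ x * W ε x))
    (a : Bool → I → ℕ → ℝ)
    (ha : ∀ ε σ L, a ε σ L = ∑' x, h L x * D ε σ x * W ε x)
    -- the expansion h(L,x) = Σ_σ a_ε^σ(L) D_ε^σ(x), with absolute convergence
    (hexpandSummable : ∀ ε L x, Summable (fun σ => |a ε σ L * D ε σ x|))
    (hexpand : ∀ ε L x, (∑' σ, a ε σ L * D ε σ x) = h L x)
    -- absolute summability of the double families over (σ, x) appearing below
    (hdbl1 : ∀ L, Summable (fun p : I × S =>
      |D false p.1 p.2 * Q false L p.2| *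
        (∑' y, h L y * |D true p.1 y * W true y - D false p.1 y * W false y|)))
    (hdbl2 : ∀ L, Summable (fun p : I × S =>
      |D true p.1 p.2 - D false p.1 p.2| * Q false L p.2 *
        (∑' y, |h L y * D true p.1 y * W true y|)))
    (hdbl3 : ∀ L, Summable (fun p : I × S =>
      |D true p.1 p.2| * |Q true L p.2 - Q false L p.2| *
        (∑' y, |h L y * D true p.1 y * W true y|)))
    (hconcSummable : ∀ L, Summable (fun x => h L x * |Q true L x - Q false L x|))
    -- the bounds C₁, C₂
    (C₁ C₂ : ℝ) (hC₁ : 0 ≤ C₁) (hC₂ : 0 ≤ C₂)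
    (hbound1 : ∀ σ (L : ℕ), (∑' y, h L y * |D true σ y * W true y - D false σ y * W false y|)
        ≤ C₁ * (L : ℝ) ^ 2)
    (hbound2 : ∀ σ (L : ℕ), (∑' y, |h L y * D true σ y * W true y|) ≤ C₂ * (L : ℝ) ^ 2)
    -- the bounds M₁, M₃
    (M₁ M₃ : ℕ → I → ℝ)
    (hM₁0 : ∀ L σ, 0 ≤ M₁ L σ) (hM₃0 : ∀ L σ, 0 ≤ M₃ L σ)
    (hbound3 : ∀ σ (L : ℕ), (∑' x, |D false σ x| * Q false L x) ≤ M₁ L σ)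
    (hbound4 : ∀ σ (L : ℕ), (∑' x, |D true σ x| * |Q true L x - Q false L x|) ≤ M₃ L σ)
    (hM₁sum : ∀ (L : ℕ), Summable (fun σ => (L : ℝ) ^ 2 * M₁ L σ))
    (hM₃sum : ∀ (L : ℕ), Summable (fun σ => (L : ℝ) ^ 2 * M₃ L σ))
    (hM₁lim : ∀ σ, Tendsto (fun L : ℕ => (L : ℝ) ^ 2 * M₁ L σ) atTop (𝓝 0))
    (hM₃lim : ∀ σ, Tendsto (fun L : ℕ => (L : ℝ) ^ 2 * M₃ L σ) atTop (𝓝 0))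
    (g₁ g₃ : I → ℝ) (hg₁0 : ∀ σ, 0 ≤ g₁ σ) (hg₃0 : ∀ σ, 0 ≤ g₃ σ)
    (hg₁sum : Summable g₁) (hg₃sum : Summable g₃)
    (hg₁ : ∀ (L : ℕ) σ, (L : ℝ) ^ 2 * M₁ L σ ≤ g₁ σ)
    (hg₃ : ∀ (L : ℕ) σ, (L : ℝ) ^ 2 * M₃ L σ ≤ g₃ σ)
    -- the final assumption
    (hfinal : Tendsto (fun L : ℕ => ∑' σ,
      (∑' x, |D true σ x - D false σ x| * Q false L x) *
      (∑' y, |h L y * D true σ y * W true y|)) atTop (𝓝 0)) :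
    Tendsto (fun L : ℕ => ∑' x, h L x * |Q true L x - Q false L x|) atTop (𝓝 0) := by

  -- Notation: for each L, bound the conclusion sum by `C₂ * ∑' σ, L² * M₃ L σ`.
  have key : ∀ L : ℕ, (∑' x, h L x * |Q true L x - Q false L x|)
      ≤ C₂ * ∑' σ, (L : ℝ) ^ 2 * M₃ L σ := by
    intro L
    set ΔQ : S → ℝ := fun x => |Q true L x - Q false L x| with hΔQdef
    have hΔQ0 : ∀ x, 0 ≤ ΔQ x := fun x => abs_nonneg _
    set c : I → ℝ := fun σ => ∑' y, |h L y * D true σ y * W true y| with hcdef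
    have hc0 : ∀ σ, 0 ≤ c σ := fun σ => tsum_nonneg (fun y => abs_nonneg _)
    set G : I × S → ℝ := fun p => |D true p.1 p.2| * ΔQ p.2 * c p.1 with hGdef
    have hGsum : Summable G := hdbl3 L
    have hG0 : ∀ p, 0 ≤ G p :=
      fun p => mul_nonneg (mul_nonneg (abs_nonneg _) (hΔQ0 _)) (hc0 _)
    have hGswap : Summable (fun p : S × I => G p.swap) := hGsum.prod_symm
    have hGswap0 : ∀ p : S × I, 0 ≤ G p.swap := fun p => hG0 _
    have hac : ∀ σ, |a true σ L| ≤ c σ := by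
      intro σ
      rw [ha]
      simpa only [Real.norm_eq_abs] using norm_tsum_le_tsum_norm
        (f := fun x => h L x * D true σ x * W true x)
        (by simpa only [Real.norm_eq_abs] using (hasum true L σ).abs)
    -- pointwise bound in x
    have step1 : ∀ x, h L x * ΔQ x ≤ ∑' σ, G (σ, x) := by
      intro x
      have hx : h L x * ΔQ x = ∑' σ, a true σ L * D true σ x * ΔQ x := by
        rw [← hexpand true L x, tsum_mul_right]
      rw [hx]
      refine Summable.tsum_le_tsum (fun σ => ?_)
        ((summable_abs_iff.mp (hexpandSummable true L x)).mul_right (ΔQ x))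
        (hGswap.prod_factor x)
      calc a true σ L * D true σ x * ΔQ x
          ≤ |a true σ L * D true σ x| * ΔQ x :=
            mul_le_mul_of_nonneg_right (le_abs_self _) (hΔQ0 x)
        _ ≤ (c σ * |D true σ x|) * ΔQ x := by
            rw [abs_mul]
            exact mul_le_mul_of_nonneg_right
              (mul_le_mul_of_nonneg_right (hac σ) (abs_nonneg _)) (hΔQ0 x)
        _ = G (σ, x) := by simp [hGdef]; ring
    have hsumOuter : Summable (fun x => ∑' σ, G (σ, x)) :=
      ((summable_prod_of_nonneg hGswap0).mp hGswap).2
    have hsumInner : Summable (fun σ => ∑' x, G (σ, x)) :=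
      ((summable_prod_of_nonneg hG0).mp hGsum).2
    calc (∑' x, h L x * ΔQ x)
        ≤ ∑' x, ∑' σ, G (σ, x) := Summable.tsum_le_tsum step1 (hconcSummable L) hsumOuter
      _ = ∑' σ, ∑' x, G (σ, x) := Summable.tsum_comm (f := fun σ x => G (σ, x)) hGsum
      _ = ∑' σ, (∑' x, |D true σ x| * ΔQ x) * c σ :=
          tsum_congr fun σ => by simp only [hGdef]; exact tsum_mul_right
      _ ≤ ∑' σ, C₂ * ((L : ℝ) ^ 2 * M₃ L σ) := by
          refine Summable.tsum_le_tsum (fun σ => ?_)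
            (hsumInner.congr fun σ => by simp only [hGdef]; exact tsum_mul_right)
            ((hM₃sum L).mul_left C₂)
          calc (∑' x, |D true σ x| * ΔQ x) * c σ
              ≤ M₃ L σ * (C₂ * (L : ℝ) ^ 2) :=
                mul_le_mul (hbound4 σ L) (hbound2 σ L) (hc0 σ) (hM₃0 L σ)
            _ = C₂ * ((L : ℝ) ^ 2 * M₃ L σ) := by ring
      _ = C₂ * ∑' σ, (L : ℝ) ^ 2 * M₃ L σ := tsum_mul_left
  have hb : Tendsto (fun L : ℕ => ∑' σ, (L : ℝ) ^ 2 * M₃ L σ) atTop (𝓝 0) := by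
    have := tendsto_tsum_of_dominated_convergence
      (f := fun (L : ℕ) (σ : I) => (L : ℝ) ^ 2 * M₃ L σ) (g := fun _ => 0)
      (bound := g₃) hg₃sum hM₃lim ?_
    · simpa using this
    · filter_upwards with L σ
      rw [Real.norm_eq_abs, abs_of_nonneg (mul_nonneg (sq_nonneg _) (hM₃0 L σ))]
      exact hg₃ L σ
  refine squeeze_zero (fun L => tsum_nonneg fun x => mul_nonneg (hh L x) (abs_nonneg _))
    key ?_
  simpa using hb.const_mul C₂
end

section
/- Let q, z, t, s be complex numbers with q ≠ 0, s ≠ 0, z·q² ≠ 1 and t ≠ 1. Let T(z,t), T_rev(z) be the 4×4 matrices defined in the context, and let D_c be the 4×4 complex matrix (with s playing the role of q^{2c}) with rows: row 1 = [ (t·s^{−1}q^{−2} − 1)(t·s^{−1}q^{−4} − 1), −t·(t − s·q²)·(s − 1)·s^{−2}q^{−6}, −t·(t − s·q²)·(s − 1)·s^{−2}q^{−6}, t²·(s − q²)·(s − 1)·s^{−2}q^{−8} ]; row 2 = [ 1 − t·s^{−1}q^{−2}, −(t·s^{−1}q^{−2} − 1)·q^{−2}, t·(s − 1)·s^{−1}q^{−4},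 t·(s − 1)·s^{−1}q^{−6} ]; row 3 = [ 1 − t·s^{−1}q^{−2}, t·(s·q² − 1)·s^{−1}q^{−4}, −(s^{−1}t − 1)·q^{−4}, t·(s − 1)·s^{−1}q^{−6} ]; row 4 = [ 1, q^{−4}, q^{−4}, q^{−8} ]. Then T(z,t)·D_c = D_c·(T_rev(z))ᵀ. -/
open Matrix

/-- The reversed non-dynamic two-site stochastic six-vertex transfer matrix. -/
noncomputable def Trev (q z : ℂ) : Matrix (Fin 4) (Fin 4) ℂ :=
  !![1, 0, 0, 0;
     0, (q ^ 2 - 1) / (z * q ^ 2 - 1), q ^ 2 * (z - 1) / (z * q ^ 2 - 1), 0;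
     0, (z - 1) / (z * q ^ 2 - 1), z * (q ^ 2 - 1) / (z * q ^ 2 - 1), 0;
     0, 0, 0, 1]

/-- The dynamic two-site stochastic six-vertex transfer matrix, with dynamic
parameter `t = e^{-2πiλ}`. -/
noncomputable def Tdyn (q z t : ℂ) : Matrix (Fin 4) (Fin 4) ℂ :=
  !![1, 0, 0, 0;
     0, (q ^ 2 - 1) * (1 - t * z) / ((z * q ^ 2 - 1) * (1 - t)),
        (q ^ 2 - t) * (z - 1) / ((z * q ^ 2 - 1) * (1 - t)), 0;
     0, (z - 1) * (1 - t * q ^ 2) / ((z * q ^ 2 - 1) * (1 - t)),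
        (q ^ 2 - 1) * (z - t) / ((z * q ^ 2 - 1) * (1 - t)), 0;
     0, 0, 0, 1]

/-- The two-site duality matrix `D_c`, with `s = q^{2c}` and `t = e^{-2πiλ}`. -/
noncomputable def Dc (q s t : ℂ) : Matrix (Fin 4) (Fin 4) ℂ :=
  !![(t * s⁻¹ * q ^ (-2 : ℤ) - 1) * (t * s⁻¹ * q ^ (-4 : ℤ) - 1),
       -t * (t - s * q ^ 2) * (s - 1) * s ^ (-2 : ℤ) * q ^ (-6 : ℤ),
       -t * (t - s * q ^ 2) * (s - 1) * s ^ (-2 : ℤ) * q ^ (-6 : ℤ),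
       t ^ 2 * (s - q ^ 2) * (s - 1) * s ^ (-2 : ℤ) * q ^ (-8 : ℤ);
     1 - t * s⁻¹ * q ^ (-2 : ℤ),
       -(t * s⁻¹ * q ^ (-2 : ℤ) - 1) * q ^ (-2 : ℤ),
       t * (s - 1) * s⁻¹ * q ^ (-4 : ℤ),
       t * (s - 1) * s⁻¹ * q ^ (-6 : ℤ);
     1 - t * s⁻¹ * q ^ (-2 : ℤ),
       t * (s * q ^ 2 - 1) * s⁻¹ * q ^ (-4 : ℤ),
       -(s⁻¹ * t - 1) * q ^ (-4 : ℤ),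
       t * (s - 1) * s⁻¹ * q ^ (-6 : ℤ);
     1, q ^ (-4 : ℤ), q ^ (-4 : ℤ), q ^ (-8 : ℤ)]

/-!
Clearing the denominators `(z q² - 1)(1 - t)`, `z q² - 1` and `s² q⁸` of the three matrices reduces
the duality, which is homogeneous in `Dc`, to the polynomial identity
`TdynNum · DcNum = (1 - t) · DcNum · TrevNumᵀ`, checked entrywise.
-/

theorem Matrix.inv_smul_mul_smul_eq_smul_mul_inv_smul {K n : Type*} [Field K] [Fintype n]
    {P Q R : Matrix n n K} {r u : K} (c : K) (hu : u ≠ 0) (h : P * Q = u • (Q * R)) :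
    ((r * u)⁻¹ • P) * (c • Q) = (c • Q) * (r⁻¹ • R) := by
  simp only [Matrix.smul_mul, Matrix.mul_smul, h, smul_smul]
  congr 1
  rw [mul_inv]
  field_simp

noncomputable def TdynNum (q z t : ℂ) : Matrix (Fin 4) (Fin 4) ℂ :=
  !![(z * q ^ 2 - 1) * (1 - t), 0, 0, 0;
     0, (q ^ 2 - 1) * (1 - t * z), (q ^ 2 - t) * (z - 1), 0;
     0, (z - 1) * (1 - t * q ^ 2), (q ^ 2 - 1) * (z - t), 0;
     0, 0, 0, (z * q ^ 2 - 1) * (1 - t)]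

noncomputable def TrevNum (q z : ℂ) : Matrix (Fin 4) (Fin 4) ℂ :=
  !![z * q ^ 2 - 1, 0, 0, 0;
     0, q ^ 2 - 1, q ^ 2 * (z - 1), 0;
     0, z - 1, z * (q ^ 2 - 1), 0;
     0, 0, 0, z * q ^ 2 - 1]

noncomputable def DcNum (q s t : ℂ) : Matrix (Fin 4) (Fin 4) ℂ :=
  !![q ^ 2 * (t - s * q ^ 2) * (t - s * q ^ 4),
       -t * (t - s * q ^ 2) * (s - 1) * q ^ 2,
       -t * (t - s * q ^ 2) * (s - 1) * q ^ 2,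
       t ^ 2 * (s - q ^ 2) * (s - 1);
     s * q ^ 6 * (s * q ^ 2 - t), s * q ^ 4 * (s * q ^ 2 - t),
       t * (s - 1) * s * q ^ 4, t * (s - 1) * s * q ^ 2;
     s * q ^ 6 * (s * q ^ 2 - t), t * (s * q ^ 2 - 1) * s * q ^ 4,
       s * q ^ 4 * (s - t), t * (s - 1) * s * q ^ 2;
     s ^ 2 * q ^ 8, s ^ 2 * q ^ 4, s ^ 2 * q ^ 4, s ^ 2]

theorem Tdyn_eq_inv_smul (q z t : ℂ) (hz : z * q ^ 2 ≠ 1) (ht : t ≠ 1) :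
    Tdyn q z t = ((z * q ^ 2 - 1) * (1 - t))⁻¹ • TdynNum q z t := by
  have hz₀ : z * q ^ 2 - 1 ≠ 0 := sub_ne_zero.mpr hz
  have ht₀ : 1 - t ≠ 0 := sub_ne_zero.mpr ht.symm
  ext i j
  fin_cases i <;> fin_cases j <;> simp [Tdyn, TdynNum] <;> field_simp

theorem Trev_eq_inv_smul (q z : ℂ) (hz : z * q ^ 2 ≠ 1) :
    Trev q z = (z * q ^ 2 - 1)⁻¹ • TrevNum q z := by
  have hz₀ : z * q ^ 2 - 1 ≠ 0 := sub_ne_zero.mpr hz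
  ext i j
  fin_cases i <;> fin_cases j <;> simp [Trev, TrevNum] <;> field_simp

theorem Dc_eq_inv_smul (q s t : ℂ) (hq : q ≠ 0) (hs : s ≠ 0) :
    Dc q s t = (s ^ 2 * q ^ 8)⁻¹ • DcNum q s t := by
  ext i j
  fin_cases i <;> fin_cases j <;> simp [Dc, DcNum] <;> field_simp

theorem TdynNum_mul_DcNum (q z t s : ℂ) :
    TdynNum q z t * DcNum q s t = (1 - t) • (DcNum q s t * (TrevNum q z)ᵀ) := by
  ext i j
  fin_cases i <;> fin_cases j <;>
    simp [TdynNum, DcNum, TrevNum, mul_apply, Fin.sum_univ_four, vecMul, dotProduct] <;> ring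

/-- The two-site duality `𝒯^{stoch}(z,λ) D_c = D_c (𝒯^{stoch}_rev(z,−i∞))*` between the
dynamic stochastic six-vertex model and the reversed non-dynamic one. -/
theorem Tdyn_duality_Dc (q z t s : ℂ)
    (hq : q ≠ 0) (hs : s ≠ 0) (hz : z * q ^ 2 ≠ 1) (ht : t ≠ 1) :
    Tdyn q z t * Dc q s t = Dc q s t * (Trev q z)ᵀ := by
  rw [Tdyn_eq_inv_smul q z t hz ht, Trev_eq_inv_smul q z hz, Dc_eq_inv_smul q s t hq hs,
    transpose_smul]
  exact inv_smul_mul_smul_eq_smul_mul_inv_smul _ (sub_ne_zero.mpr ht.symm)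
    (TdynNum_mul_DcNum q z t s)
end

section
/- Let q, z, u be complex numbers with q ≠ 0 and z·q² ≠ 1. Let T_rev(z) be the 4×4 matrix defined in the context, and let D_new be the 4×4 complex matrix (with u playing the role of q^{2C₀}) with rows: row 1 = [ (u − q²)(u − q⁴)·q^{−6}, u·(u − q²)·q^{−6}, u·(u − q²)·q^{−6}, u²·q^{−6} ]; row 2 = [ 1 − u·q^{−2}, −(u − q²)·q^{−4}, −u·q^{−4}, −u·q^{−6} ]; row 3 = [ 1 − u·q^{−2}, −u·q^{−4}, −(u − 1)·q^{−4}, −u·q^{−6} ]; row 4 = [ 1, q^{−4}, q^{−4}, q^{−8} ]. Then T_rev(z)·D_new = D_new·(T_rev(z))ᵀ (this is the identity 𝒯^{stoch}(z,−i∞)·D_new = D_new·(𝒯^{stoch}_rev(z,−i∞))*, since the dynamic transfer matrix at λ = −i∞ equals T_rev(z)). -/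
open Matrix

/-- The two-site duality matrix `D_new`, with `u = q^{2C₀}`. -/
noncomputable def Dnew (q u : ℂ) : Matrix (Fin 4) (Fin 4) ℂ :=
  !![(u - q ^ 2) * (u - q ^ 4) * q ^ (-6 : ℤ),
       u * (u - q ^ 2) * q ^ (-6 : ℤ),
       u * (u - q ^ 2) * q ^ (-6 : ℤ),
       u ^ 2 * q ^ (-6 : ℤ);
     1 - u * q ^ (-2 : ℤ),
       -(u - q ^ 2) * q ^ (-4 : ℤ),
       -u * q ^ (-4 : ℤ),
       -u * q ^ (-6 : ℤ);
     1 - u * q ^ (-2 : ℤ),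
       -u * q ^ (-4 : ℤ),
       -(u - 1) * q ^ (-4 : ℤ),
       -u * q ^ (-6 : ℤ);
     1, q ^ (-4 : ℤ), q ^ (-4 : ℤ), q ^ (-8 : ℤ)]

/-!
The transfer matrix is affine in a single rate: `Trev q z = 1 + c • G` with
`c = (z - 1) / (z q² - 1)` and `G` the `z`-independent generator of the two-site
six-vertex jump. Since `G D = D Gᵀ` implies `(1 + c • G) D = D (1 + c • G)ᵀ`,
the duality for every `z` reduces to the `z`-free identity `G D = D Gᵀ`.
-/

theorem Matrix.mul_eq_mul_transpose_of_eq_one_add_smul {n R : Type*} [Fintype n]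
    [DecidableEq n] [CommRing R] {T G D : Matrix n n R} (c : R) (hT : T = 1 + c • G)
    (hG : G * D = D * Gᵀ) : T * D = D * Tᵀ := by
  simp [hT, add_mul, mul_add, transpose_add, transpose_smul, hG]

def sixVertexGenerator {R : Type*} [CommRing R] (q : R) : Matrix (Fin 4) (Fin 4) R :=
  !![0, 0, 0, 0;
     0, -q ^ 2, q ^ 2, 0;
     0, 1, -1, 0;
     0, 0, 0, 0]

theorem Trev_eq_one_add_smul_sixVertexGenerator {q z : ℂ} (hz : z * q ^ 2 ≠ 1) :
    Trev q z = 1 + ((z - 1) / (z * q ^ 2 - 1)) • sixVertexGenerator q := by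
  have hd : z * q ^ 2 - 1 ≠ 0 := sub_ne_zero.mpr hz
  ext i j
  fin_cases i <;> fin_cases j <;> simp [Trev, sixVertexGenerator, one_apply] <;>
    rw [eq_comm, ← sub_eq_zero] <;> field_simp <;> ring

theorem sixVertexGenerator_mul_Dnew {q : ℂ} (hq : q ≠ 0) (u : ℂ) :
    sixVertexGenerator q * Dnew q u = Dnew q u * (sixVertexGenerator q)ᵀ := by
  ext i j
  fin_cases i <;> fin_cases j <;>
    simp [sixVertexGenerator, Dnew, mul_apply, Fin.sum_univ_four] <;> field_simp <;> ring

/-- The two-site duality `𝒯^{stoch}(z,−i∞) D_new = D_new (𝒯^{stoch}_rev(z,−i∞))*`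
for the non-dynamic stochastic six-vertex model (at `λ = −i∞` the dynamic
transfer matrix equals `Trev`). -/
theorem Trev_duality_Dnew (q z u : ℂ) (hq : q ≠ 0) (hz : z * q ^ 2 ≠ 1) :
    Trev q z * Dnew q u = Dnew q u * (Trev q z)ᵀ :=
  mul_eq_mul_transpose_of_eq_one_add_smul _ (Trev_eq_one_add_smul_sixVertexGenerator hz)
    (sixVertexGenerator_mul_Dnew hq u)
end

section
/- Let q be a real number with q > 0 and q ≠ 1, and define the symmetric q-factorial [n]! := ∏_{k=1}^{n} (q^k − q^{−k})/(q − q^{−1}) for n ∈ ℕ (each factor is positive, so [n]! > 0). Let a, b be natural numbers (a = 2J₁ and b = 2J₂ are twice the spins) and, for natural numbers m ≤ a and n ≤ b, define g(a,b;m,n) := ( [a−m]! · [b−n]! · [n]! · [m]! )^{−1/2} · q^{(a/2 + b)·m + (b/2)·n}, where the powers of q with possibly half-integer exponents are real powers of the positive real q. Then for all ξ₁ ≤ a and ξ₂ ≤ b: g(a, b; a−ξ₁, b−ξ₂) = q^{(a+b)·((a+b)/2 − ξ₁ − ξ₂)} · g(b, a; ξ₂, ξ₁). Equivalently, with Π the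 arrow–hole reversal ⟨β|Π|α⟩ = 1_{β = 2J−α} and P the flip of the two tensor factors, the diagonal ground-state matrix G(−i∞) with entries g satisfies Π^{⊗2}·G(−i∞)·Π^{⊗2} = C·P·G(−i∞)·P with constant C = q^{2(J₁+J₂)(J₁+J₂−ξ₁−ξ₂)} on the (ξ₁,ξ₂) diagonal entry, where J₁ = a/2 and J₂ = b/2. -/
/-- The symmetric q-factorial `[n]! = ∏_{k=1}^n (qᵏ − q⁻ᵏ)/(q − q⁻¹)`. -/
noncomputable def qfact (q : ℝ) (n : ℕ) : ℝ :=
  ∏ k ∈ Finset.range n, (q ^ ((k : ℤ) + 1) - q ^ (-((k : ℤ) + 1))) / (q - q ^ (-1 : ℤ))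

/-- The diagonal entry `g(a,b;m,n)` of the two-site ground-state matrix `G(−i∞)`:
`g(a,b;m,n) = ([a−m]![b−n]![n]![m]!)^{−1/2} · q^{(a/2+b)m + (b/2)n}`, where `a = 2J₁`
and `b = 2J₂` are twice the spins; half-integer powers of the positive real `q` are
real powers. -/
noncomputable def gGS (q : ℝ) (a b m n : ℕ) : ℝ :=
  (qfact q (a - m) * qfact q (b - n) * qfact q n * qfact q m) ^ (-(1 / 2) : ℝ) *
    q ^ (((a : ℝ) / 2 + (b : ℝ)) * (m : ℝ) + ((b : ℝ) / 2) * (n : ℝ))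

/-- The ground-state symmetry `Π^{⊗2} G(−i∞) Π^{⊗2} = C · P G(−i∞) P`, written out on the
`(ξ₁, ξ₂)` diagonal entry: `g(a,b; a−ξ₁, b−ξ₂) = q^{(a+b)((a+b)/2 − ξ₁ − ξ₂)} · g(b,a; ξ₂, ξ₁)`,
i.e. the constant is `C = q^{2(J₁+J₂)(J₁+J₂−ξ₁−ξ₂)}` with `J₁ = a/2`, `J₂ = b/2`. -/
theorem groundState_reversal_symmetry
    (q : ℝ) (hq0 : 0 < q) (hq1 : q ≠ 1) (a b : ℕ)
    (ξ₁ ξ₂ : ℕ) (hξ₁ : ξ₁ ≤ a) (hξ₂ : ξ₂ ≤ b) :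
    gGS q a b (a - ξ₁) (b - ξ₂)
      = q ^ (((a : ℝ) + (b : ℝ)) * (((a : ℝ) + (b : ℝ)) / 2 - (ξ₁ : ℝ) - (ξ₂ : ℝ))) *
        gGS q b a ξ₂ ξ₁ := by
  unfold gGS
  rw [Nat.sub_sub_self hξ₁, Nat.sub_sub_self hξ₂,
    Nat.cast_sub hξ₁, Nat.cast_sub hξ₂]
  rw [show qfact q ξ₁ * qfact q ξ₂ * qfact q (b - ξ₂) * qfact q (a - ξ₁)
      = qfact q (b - ξ₂) * qfact q (a - ξ₁) * qfact q ξ₁ * qfact q ξ₂ by ring]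
  rw [mul_comm (q ^ (((a : ℝ) + (b : ℝ)) * (((a : ℝ) + (b : ℝ)) / 2 - (ξ₁ : ℝ) - (ξ₂ : ℝ))))]
  conv_rhs => rw [mul_assoc, ← Real.rpow_add hq0]
  congr 1
  ring
end
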